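/- arXiv:2308.12243 — 8 statements merged into one kernel-verified Lean document; each statement's English description precedes it below -/
import Mathlib

section
/- Let Ω be a nonempty subset of ℝ^n, let L_0, …, L_m : ℝ^n → ℝ, let a ∈ ℝ^{m+1} satisfy a_i < L_i(x) for all x ∈ Ω and all i, and let k ∈ ℝ^{m+1} satisfy k_i ≥ 0 for all i and Σ_{i=0}^m k_i = 1. If x* ∈ Ω minimizes the weighted Chebyshev objective φ_k(x) = max_{0≤i≤m} k_i (L_i(x) − a_i) over Ω, then x* is weakly Pareto optimal. -/
open Finset

/-!
If `x'` strictly improved every objective, then each term `k i * (L i x' - a i)` with `k i > 0`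
would drop strictly below its value at `x*`, and the terms with `k i = 0` vanish. Since some
weight is positive and `a` lies strictly below all objective values, the Chebyshev value at `x*`
is positive, so it bounds the vanishing terms strictly as well: `x'` would have a strictly
smaller Chebyshev value than the minimizer `x*`.
-/

section ChebyshevScalarization

variable {ι R : Type*} [Fintype ι] [Nonempty ι] [Semiring R] [LinearOrder R]
  [IsStrictOrderedRing R]

def chebyshevScalarization (k y : ι → R) : R :=
  univ.sup' univ_nonempty fun i => k i * y i

theorem chebyshevScalarization_pos {k y : ι → R} {j : ι} (hkj : 0 < k j) (hyj : 0 < y j) :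
    0 < chebyshevScalarization k y :=
  (mul_pos hkj hyj).trans_le (le_sup' (fun i => k i * y i) (mem_univ j))

theorem chebyshevScalarization_lt_of_lt {k y z : ι → R} (hk : ∀ i, 0 ≤ k i)
    (hyz : ∀ i, y i < z i) (hz : 0 < chebyshevScalarization k z) :
    chebyshevScalarization k y < chebyshevScalarization k z := by
  refine (sup'_lt_iff univ_nonempty).2 fun i _ => ?_
  rcases (hk i).lt_or_eq with hki | hki
  · exact (mul_lt_mul_of_pos_left (hyz i) hki).trans_le (le_sup' (fun i => k i * z i) (mem_univ i))
  · rwa [← hki, zero_mul]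

end ChebyshevScalarization

theorem weightedChebyshev_minimizer_weaklyParetoOptimal_general
    (n m : ℕ) (Ω : Set (Fin n → ℝ))
    (L : Fin (m + 1) → (Fin n → ℝ) → ℝ)
    (a k : Fin (m + 1) → ℝ)
    (ha : ∀ x ∈ Ω, ∀ i, a i < L i x)
    (hk : ∀ i, 0 ≤ k i) (hksum : ∑ i, k i = 1)
    (xstar : Fin n → ℝ) (hxstar : xstar ∈ Ω)
    (hmin : ∀ x ∈ Ω,
      Finset.univ.sup' Finset.univ_nonempty (fun i => k i * (L i xstar - a i)) ≤
        Finset.univ.sup' Finset.univ_nonempty (fun i => k i * (L i x - a i))) :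
    ¬ ∃ x' ∈ Ω, ∀ i, L i x' < L i xstar := by
  rintro ⟨x', hx', hdom⟩
  obtain ⟨j, -, hkj⟩ : ∃ j ∈ univ, (0 : ℝ) < k j :=
    exists_lt_of_sum_lt (by simp [hksum])
  have hpos : 0 < chebyshevScalarization k fun i => L i xstar - a i :=
    chebyshevScalarization_pos hkj (sub_pos.2 (ha xstar hxstar j))
  have hlt : chebyshevScalarization k (fun i => L i x' - a i) <
      chebyshevScalarization k fun i => L i xstar - a i :=
    chebyshevScalarization_lt_of_lt hk (fun i => sub_lt_sub_right (hdom i) (a i)) hpos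
  exact (hmin x' hx').not_gt hlt

/-- If `x*` minimizes the weighted Chebyshev objective
`φ_k(x) = max_i k_i (L_i(x) - a_i)` over a nonempty set `Ω ⊆ ℝ^n`,
with `a_i < L_i(x)` on `Ω`, `k_i ≥ 0` and `∑ k_i = 1`, then `x*` is
weakly Pareto optimal. -/
theorem weightedChebyshev_minimizer_weaklyParetoOptimal
    (n m : ℕ) (Ω : Set (Fin n → ℝ))
    (L : Fin (m + 1) → (Fin n → ℝ) → ℝ)
    (a k : Fin (m + 1) → ℝ)
    (hΩ : Ω.Nonempty)
    (ha : ∀ x ∈ Ω, ∀ i, a i < L i x)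
    (hk : ∀ i, 0 ≤ k i) (hksum : ∑ i, k i = 1)
    (xstar : Fin n → ℝ) (hxstar : xstar ∈ Ω)
    (hmin : ∀ x ∈ Ω,
      Finset.univ.sup' Finset.univ_nonempty (fun i => k i * (L i xstar - a i)) ≤
        Finset.univ.sup' Finset.univ_nonempty (fun i => k i * (L i x - a i))) :
    ¬ ∃ x' ∈ Ω, ∀ i, L i x' < L i xstar :=
  weightedChebyshev_minimizer_weaklyParetoOptimal_general n m Ω L a k ha hk hksum xstar hxstar hmin
end

section
/- Let Ω be a nonempty compact subset of ℝ^n, let L_0, …, L_m : ℝ^n → ℝ be continuous, let a ∈ ℝ^{m+1} satisfy a_i < L_i(x) for all x ∈ Ω and all i, and let k ∈ ℝ^{m+1} satisfy k_i ≥ 0 for all i and Σ_{i=0}^m k_i = 1. Then there exists x* ∈ Ω that minimizes the weighted Chebyshev objective φ_k(x) = max_{0≤i≤m} k_i (L_i(x) − a_i) over Ω and is Pareto optimal; in particular, the weighted Chebyshev scalarization problem has at least one Pareto optimal solution. -/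
/-!
Minimize the Chebyshev objective `φ` over `Ω`, and among its minimizers minimize the sum
`∑ i, L i` of the objectives; both minima exist by compactness. The Chebyshev objective is
monotone in the objective values, so a point dominating this lexicographic minimizer would
still minimize `φ` while having a strictly smaller sum.
-/

open Finset

def IsParetoOptimal {ι X : Type*} (s : Set X) (L : ι → X → ℝ) (x : X) : Prop :=
  ¬ ∃ y ∈ s, (∀ i, L i y ≤ L i x) ∧ ∃ j, L j y < L j x

theorem IsCompact.exists_isMinOn_isMinOn_sublevel {X α : Type*} [TopologicalSpace X]
    [LinearOrder α] [TopologicalSpace α] [OrderTopology α] {s : Set X} (hs : IsCompact s)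
    (hne : s.Nonempty) {f g : X → α} (hf : ContinuousOn f s) (hg : ContinuousOn g s) :
    ∃ x ∈ s, IsMinOn f s x ∧ IsMinOn g {y ∈ s | f y ≤ f x} x := by
  obtain ⟨x₀, hx₀, hfx₀⟩ := hs.exists_isMinOn hne hf
  have hM : IsCompact (s ∩ f ⁻¹' Set.Iic (f x₀)) :=
    hf.lowerSemicontinuousOn.isCompact_inter_preimage_Iic hs _
  obtain ⟨x, ⟨hxs, hxx₀⟩, hgx⟩ :=
    hM.exists_isMinOn ⟨x₀, hx₀, le_rfl⟩ (hg.mono Set.inter_subset_left)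
  refine ⟨x, hxs, fun y hy => le_trans hxx₀ (hfx₀ hy), fun y ⟨hys, hyx⟩ => ?_⟩
  exact hgx ⟨hys, le_trans hyx hxx₀⟩

theorem isParetoOptimal_of_isMinOn_sum {ι X : Type*} [Fintype ι] {s t : Set X}
    {L : ι → X → ℝ} {x : X} (hmin : IsMinOn (fun y => ∑ i, L i y) t x)
    (hdom : ∀ y ∈ s, (∀ i, L i y ≤ L i x) → y ∈ t) : IsParetoOptimal s L x := by
  rintro ⟨y, hys, hle, j, hlt⟩
  have hsum : ∑ i, L i y < ∑ i, L i x :=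
    Finset.sum_lt_sum (fun i _ => hle i) ⟨j, mem_univ j, hlt⟩
  exact (hmin (hdom y hys hle)).not_gt hsum

theorem weightedChebyshev_mono {ι X : Type*} [Fintype ι] [Nonempty ι] {L : ι → X → ℝ}
    {a k : ι → ℝ} (hk : ∀ i, 0 ≤ k i) {x y : X} (hle : ∀ i, L i y ≤ L i x) :
    univ.sup' univ_nonempty (fun i => k i * (L i y - a i)) ≤
      univ.sup' univ_nonempty (fun i => k i * (L i x - a i)) :=
  sup'_mono_fun fun i _ => mul_le_mul_of_nonneg_left (sub_le_sub_right (hle i) _) (hk i)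

theorem weightedChebyshev_exists_paretoOptimal_minimizer_general
    (n m : ℕ) (Ω : Set (Fin n → ℝ))
    (L : Fin (m + 1) → (Fin n → ℝ) → ℝ)
    (a k : Fin (m + 1) → ℝ)
    (hΩ : Ω.Nonempty) (hΩc : IsCompact Ω)
    (hL : ∀ i, Continuous (L i))
    (hk : ∀ i, 0 ≤ k i) :
    ∃ xstar ∈ Ω,
      (∀ x ∈ Ω,
        Finset.univ.sup' Finset.univ_nonempty (fun i => k i * (L i xstar - a i)) ≤
          Finset.univ.sup' Finset.univ_nonempty (fun i => k i * (L i x - a i))) ∧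
      ¬ ∃ x' ∈ Ω, (∀ i, L i x' ≤ L i xstar) ∧ ∃ j, L j x' < L j xstar := by
  set φ : (Fin n → ℝ) → ℝ := fun x => univ.sup' univ_nonempty fun i => k i * (L i x - a i)
  have hφ : Continuous φ :=
    Continuous.finset_sup'_apply univ_nonempty fun i _ =>
      continuous_const.mul ((hL i).sub continuous_const)
  have hsum : Continuous fun x => ∑ i, L i x := continuous_finsetSum _ fun i _ => hL i
  obtain ⟨xstar, hxΩ, hφmin, hsummin⟩ :=
    hΩc.exists_isMinOn_isMinOn_sublevel hΩ hφ.continuousOn hsum.continuousOn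
  exact ⟨xstar, hxΩ, hφmin, isParetoOptimal_of_isMinOn_sum hsummin
    fun y hy hle => ⟨hy, weightedChebyshev_mono hk hle⟩⟩

/-- On a nonempty compact `Ω ⊆ ℝ^n` with continuous objectives,
the weighted Chebyshev scalarization problem has a minimizer that is Pareto
optimal; in particular it has at least one Pareto optimal solution. -/
theorem weightedChebyshev_exists_paretoOptimal_minimizer
    (n m : ℕ) (Ω : Set (Fin n → ℝ))
    (L : Fin (m + 1) → (Fin n → ℝ) → ℝ)
    (a k : Fin (m + 1) → ℝ)
    (hΩ : Ω.Nonempty) (hΩc : IsCompact Ω)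
    (hL : ∀ i, Continuous (L i))
    (ha : ∀ x ∈ Ω, ∀ i, a i < L i x)
    (hk : ∀ i, 0 ≤ k i) (hksum : ∑ i, k i = 1) :
    ∃ xstar ∈ Ω,
      (∀ x ∈ Ω,
        Finset.univ.sup' Finset.univ_nonempty (fun i => k i * (L i xstar - a i)) ≤
          Finset.univ.sup' Finset.univ_nonempty (fun i => k i * (L i x - a i))) ∧
      ¬ ∃ x' ∈ Ω, (∀ i, L i x' ≤ L i xstar) ∧ ∃ j, L j x' < L j xstar :=
  weightedChebyshev_exists_paretoOptimal_minimizer_general n m Ω L a k hΩ hΩc hL hk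
end

section
/- Let Ω be a nonempty subset of ℝ^n, let L_0, …, L_m : ℝ^n → ℝ, and let a ∈ ℝ^{m+1} satisfy a_i < L_i(x) for all x ∈ Ω and all i. If x* ∈ Ω is weakly Pareto optimal, then x* minimizes over Ω the weighted Chebyshev objective φ_k(x) = max_{0≤i≤m} k_i (L_i(x) − a_i) for the importance vector defined by k_i = (L_i(x*) − a_i)^{-1} / Σ_{j=0}^m (L_j(x*) − a_j)^{-1} (which satisfies k_i > 0 and Σ_i k_i = 1). Hence every weakly Pareto optimal point is an optimal solution of the weighted Chebyshev scalarization for a suitable positive importance vector. -/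
/-!
The weights `k_i ∝ (L_i(x*) - a_i)⁻¹` make all terms `k_i (L_i(x*) - a_i)` of the Chebyshev
objective at `x*` equal to one constant `c = (∑_j (L_j(x*) - a_j)⁻¹)⁻¹`, so `φ_k(x*) = c`.
Weak Pareto optimality gives, for every `x ∈ Ω`, an index `i` with `L_i(x*) ≤ L_i(x)`, whence
`φ_k(x) ≥ k_i (L_i(x) - a_i) ≥ k_i (L_i(x*) - a_i) = c`.
-/

open Finset

section NormalizedInvWeights

variable {ι : Type*} [Fintype ι] {d : ι → ℝ}

noncomputable def normalizedInvWeights (d : ι → ℝ) (i : ι) : ℝ := (d i)⁻¹ / ∑ j, (d j)⁻¹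

lemma sum_inv_pos [Nonempty ι] (hd : ∀ i, 0 < d i) : 0 < ∑ j, (d j)⁻¹ :=
  sum_pos (fun j _ => inv_pos.mpr (hd j)) univ_nonempty

lemma normalizedInvWeights_pos [Nonempty ι] (hd : ∀ i, 0 < d i) (i : ι) :
    0 < normalizedInvWeights d i :=
  div_pos (inv_pos.mpr (hd i)) (sum_inv_pos hd)

lemma sum_normalizedInvWeights [Nonempty ι] (hd : ∀ i, 0 < d i) :
    ∑ i, normalizedInvWeights d i = 1 :=
  (sum_div _ _ _).symm.trans (div_self (sum_inv_pos hd).ne')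

lemma normalizedInvWeights_mul_self {i : ι} (hi : d i ≠ 0) :
    normalizedInvWeights d i * d i = (∑ j, (d j)⁻¹)⁻¹ := by
  rw [normalizedInvWeights, div_mul_eq_mul_div, inv_mul_cancel₀ hi, one_div]

lemma sup'_normalizedInvWeights_mul_le [Nonempty ι] (hd : ∀ i, 0 < d i) {e : ι → ℝ}
    {i : ι} (hi : d i ≤ e i) :
    univ.sup' univ_nonempty (fun j => normalizedInvWeights d j * d j) ≤
      univ.sup' univ_nonempty (fun j => normalizedInvWeights d j * e j) := by
  refine sup'_le _ _ fun j _ => le_sup'_of_le _ (mem_univ i) ?_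
  calc normalizedInvWeights d j * d j
      = normalizedInvWeights d i * d i := by
        rw [normalizedInvWeights_mul_self (hd j).ne', normalizedInvWeights_mul_self (hd i).ne']
    _ ≤ normalizedInvWeights d i * e i :=
        mul_le_mul_of_nonneg_left hi (normalizedInvWeights_pos hd i).le

end NormalizedInvWeights

theorem weaklyParetoOptimal_minimizes_weightedChebyshev_general
    (n m : ℕ) (Ω : Set (Fin n → ℝ))
    (L : Fin (m + 1) → (Fin n → ℝ) → ℝ)
    (a : Fin (m + 1) → ℝ)
    (ha : ∀ x ∈ Ω, ∀ i, a i < L i x)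
    (xstar : Fin n → ℝ) (hxstar : xstar ∈ Ω)
    (hweak : ¬ ∃ x' ∈ Ω, ∀ i, L i x' < L i xstar)
    (k : Fin (m + 1) → ℝ)
    (hkdef : ∀ i, k i = (L i xstar - a i)⁻¹ / ∑ j, (L j xstar - a j)⁻¹) :
    (∀ i, 0 < k i) ∧ (∑ i, k i = 1) ∧
      ∀ x ∈ Ω,
        Finset.univ.sup' Finset.univ_nonempty (fun i => k i * (L i xstar - a i)) ≤
          Finset.univ.sup' Finset.univ_nonempty (fun i => k i * (L i x - a i)) := by
  have hd : ∀ i, 0 < L i xstar - a i := fun i => sub_pos.mpr (ha xstar hxstar i)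
  obtain rfl : k = normalizedInvWeights (fun i => L i xstar - a i) := funext hkdef
  refine ⟨normalizedInvWeights_pos hd, sum_normalizedInvWeights hd, fun x hx => ?_⟩
  push Not at hweak
  obtain ⟨i, hi⟩ := hweak x hx
  exact sup'_normalizedInvWeights_mul_le hd (sub_le_sub_right hi (a i))

/-- Every weakly Pareto optimal point `x*` minimizes the
weighted Chebyshev objective for the importance vector
`k_i = (L_i(x*) - a_i)⁻¹ / ∑_j (L_j(x*) - a_j)⁻¹`, which is positive and
sums to one. -/
theorem weaklyParetoOptimal_minimizes_weightedChebyshev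
    (n m : ℕ) (Ω : Set (Fin n → ℝ))
    (L : Fin (m + 1) → (Fin n → ℝ) → ℝ)
    (a : Fin (m + 1) → ℝ)
    (hΩ : Ω.Nonempty)
    (ha : ∀ x ∈ Ω, ∀ i, a i < L i x)
    (xstar : Fin n → ℝ) (hxstar : xstar ∈ Ω)
    (hweak : ¬ ∃ x' ∈ Ω, ∀ i, L i x' < L i xstar)
    (k : Fin (m + 1) → ℝ)
    (hkdef : ∀ i, k i = (L i xstar - a i)⁻¹ / ∑ j, (L j xstar - a j)⁻¹) :
    (∀ i, 0 < k i) ∧ (∑ i, k i = 1) ∧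
      ∀ x ∈ Ω,
        Finset.univ.sup' Finset.univ_nonempty (fun i => k i * (L i xstar - a i)) ≤
          Finset.univ.sup' Finset.univ_nonempty (fun i => k i * (L i x - a i)) :=
  weaklyParetoOptimal_minimizes_weightedChebyshev_general n m Ω L a ha xstar hxstar hweak k hkdef
end

section
/- Let Ω be a nonempty subset of ℝ^n, let L_0, …, L_m : ℝ^n → ℝ, let a ∈ ℝ^{m+1} satisfy a_i < L_i(x) for all x ∈ Ω and all i, let ε > 0, and let k ∈ ℝ^{m+1} satisfy k_i > 0 for all i. If x* ∈ Ω minimizes over Ω the modified weighted Chebyshev objective ψ_{k,ε}(x) = max_{0≤i≤m} k_i [ (L_i(x) − a_i) + ε Σ_{j=0}^m (L_j(x) − a_j) ], then x* is properly Pareto optimal in the sense of Geoffrion. -/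
/-!
Write `y = L(x)` for the objective vector. If `x'` dominated `x*`, every term of the maximum
would strictly drop (the augmentation sum drops strictly), contradicting minimality.
For the trade-off bound, let `t = max_j (L_j x' - L_j x*)` and let `p` realise the maximum
defining `ψ(x')`. Comparing the `p`-th terms of `ψ(x*) ≤ ψ(x')` gives
`ε ∑_j (L_j x* - L_j x') ≤ L_p x' - L_p x* ≤ t`, and splitting off the `i`-th summand yields
`L_i x* - L_i x' ≤ (m + 1/ε) t`. Hence `t > 0` whenever `x'` improves objective `i`, and the
objective realising `t` bounds the trade-off ratio by `M = m + 1/ε`.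
-/

open Finset

variable {ι : Type*} [Fintype ι] [Nonempty ι]

theorem Finset.sum_le_add_card_sub_one_mul_sup' (D : ι → ℝ) (i : ι) :
    ∑ j, D j ≤ D i + ((Fintype.card ι : ℝ) - 1) * univ.sup' univ_nonempty D := by
  classical
  have hcard : ((univ.erase i).card : ℝ) = Fintype.card ι - 1 := by
    rw [card_erase_of_mem (mem_univ i), card_univ, Nat.cast_sub Fintype.card_pos, Nat.cast_one]
  have hrest : ∑ j ∈ univ.erase i, D j ≤ (univ.erase i).card • univ.sup' univ_nonempty D :=
    sum_le_card_nsmul _ _ _ fun j _ => le_sup' D (mem_univ j)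
  rw [← add_sum_erase _ _ (mem_univ i)]
  rw [nsmul_eq_mul, hcard] at hrest
  linarith

/-- The modified weighted Chebyshev objective `ψ_{k,ε}`, as a function of the objective
vector `y = (L_i x)_i`. -/
noncomputable def modChebyshev (k a : ι → ℝ) (ε : ℝ) (y : ι → ℝ) : ℝ :=
  univ.sup' univ_nonempty fun i => k i * ((y i - a i) + ε * ∑ j, (y j - a j))

variable {k a : ι → ℝ} {ε : ℝ}

theorem modChebyshev_lt_of_le_of_lt (hk : ∀ i, 0 < k i) (hε : 0 < ε) {y y' : ι → ℝ}
    (hle : ∀ i, y' i ≤ y i) (hlt : ∃ j, y' j < y j) :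
    modChebyshev k a ε y' < modChebyshev k a ε y := by
  have hsum : ∑ j, (y' j - a j) < ∑ j, (y j - a j) := by
    obtain ⟨j, hj⟩ := hlt
    exact sum_lt_sum (fun i _ => by linarith [hle i]) ⟨j, mem_univ j, by linarith⟩
  refine (sup'_lt_iff _).2 fun i hi => lt_of_lt_of_le ?_ (le_sup' _ hi)
  refine mul_lt_mul_of_pos_left ?_ (hk i)
  linarith [hle i, mul_lt_mul_of_pos_left hsum hε]

theorem exists_mul_sum_sub_le_of_modChebyshev_le (hk : ∀ i, 0 < k i) {y y' : ι → ℝ}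
    (h : modChebyshev k a ε y ≤ modChebyshev k a ε y') :
    ∃ p, ε * ∑ j, (y j - y' j) ≤ y' p - y p := by
  obtain ⟨p, -, hp⟩ := exists_mem_eq_sup' univ_nonempty
    fun i => k i * ((y' i - a i) + ε * ∑ j, (y' j - a j))
  have hterm : k p * ((y p - a p) + ε * ∑ j, (y j - a j)) ≤
      k p * ((y' p - a p) + ε * ∑ j, (y' j - a j)) :=
    calc _ ≤ modChebyshev k a ε y := le_sup' (fun i => _) (mem_univ p)
      _ ≤ modChebyshev k a ε y' := h
      _ = _ := hp
  have hsum : ∑ j, (y j - y' j) = ∑ j, (y j - a j) - ∑ j, (y' j - a j) := by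
    rw [← sum_sub_distrib]
    exact sum_congr rfl fun j _ => by ring
  refine ⟨p, ?_⟩
  rw [hsum]
  linarith [le_of_mul_le_mul_left hterm (hk p)]

theorem sub_le_mul_sup'_of_modChebyshev_le (hk : ∀ i, 0 < k i) (hε : 0 < ε) {y y' : ι → ℝ}
    (h : modChebyshev k a ε y ≤ modChebyshev k a ε y') (i : ι) :
    y i - y' i ≤ ((Fintype.card ι : ℝ) - 1 + ε⁻¹) *
      univ.sup' univ_nonempty fun j => y' j - y j := by
  set t := univ.sup' univ_nonempty fun j => y' j - y j
  obtain ⟨p, hp⟩ := exists_mul_sum_sub_le_of_modChebyshev_le hk h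
  have hsum : ∑ j, (y j - y' j) ≤ ε⁻¹ * t := by
    rw [← div_eq_inv_mul, le_div_iff₀' hε]
    exact hp.trans (le_sup' (fun j => y' j - y j) (mem_univ p))
  have hsplit := sum_le_add_card_sub_one_mul_sup' (fun j => y' j - y j) i
  have hneg : ∑ j, (y' j - y j) = -∑ j, (y j - y' j) := by
    rw [← sum_neg_distrib]
    exact sum_congr rfl fun j _ => by ring
  rw [hneg] at hsplit
  linarith

theorem exists_tradeoff_bound_of_modChebyshev_le (hk : ∀ i, 0 < k i) (hε : 0 < ε)
    (y : ι → ℝ) :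
    ∃ M > (0 : ℝ), ∀ y' : ι → ℝ, modChebyshev k a ε y ≤ modChebyshev k a ε y' →
      ∀ i, y' i < y i → ∃ j, y j < y' j ∧ (y i - y' i) / (y' j - y j) ≤ M := by
  have hcard : (1 : ℝ) ≤ Fintype.card ι := by exact_mod_cast Fintype.card_pos
  refine ⟨(Fintype.card ι : ℝ) - 1 + ε⁻¹, by positivity, fun y' h i hi => ?_⟩
  obtain ⟨j, -, hj⟩ := exists_mem_eq_sup' univ_nonempty fun j => y' j - y j
  have hbound := sub_le_mul_sup'_of_modChebyshev_le hk hε h i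
  rw [hj] at hbound
  have hgain : 0 < y' j - y j := by
    by_contra! hnonpos
    nlinarith [inv_pos.2 hε]
  exact ⟨j, sub_pos.1 hgain, (div_le_iff₀ hgain).2 (by linarith)⟩

theorem modifiedWeightedChebyshev_minimizer_properlyParetoOptimal_general
    (n m : ℕ) (Ω : Set (Fin n → ℝ))
    (L : Fin (m + 1) → (Fin n → ℝ) → ℝ)
    (a k : Fin (m + 1) → ℝ) (ε : ℝ)
    (hε : 0 < ε) (hk : ∀ i, 0 < k i)
    (xstar : Fin n → ℝ)
    (hmin : ∀ x ∈ Ω,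
      Finset.univ.sup' Finset.univ_nonempty
          (fun i => k i * ((L i xstar - a i) + ε * ∑ j, (L j xstar - a j))) ≤
        Finset.univ.sup' Finset.univ_nonempty
          (fun i => k i * ((L i x - a i) + ε * ∑ j, (L j x - a j)))) :
    (¬ ∃ x' ∈ Ω, (∀ i, L i x' ≤ L i xstar) ∧ ∃ j, L j x' < L j xstar) ∧
      ∃ M > (0 : ℝ), ∀ i, ∀ x' ∈ Ω, L i x' < L i xstar →
        ∃ j, L j xstar < L j x' ∧
          (L i xstar - L i x') / (L j x' - L j xstar) ≤ M := by
  have hmin' : ∀ x ∈ Ω,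
      modChebyshev k a ε (fun i => L i xstar) ≤ modChebyshev k a ε (fun i => L i x) := hmin
  refine ⟨fun ⟨x', hx', hle, hlt⟩ =>
    (hmin' x' hx').not_gt (modChebyshev_lt_of_le_of_lt hk hε hle hlt), ?_⟩
  obtain ⟨M, hM, hbound⟩ := exists_tradeoff_bound_of_modChebyshev_le hk hε fun i => L i xstar
  exact ⟨M, hM, fun i x' hx' hi => hbound (fun j => L j x') (hmin' x' hx') i hi⟩

/-- A minimizer over `Ω` of the modified weighted Chebyshev
objective `ψ_{k,ε}(x) = max_i k_i [(L_i(x) - a_i) + ε ∑_j (L_j(x) - a_j)]`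
with `ε > 0` and `k_i > 0` is properly Pareto optimal in the sense of
Geoffrion. -/
theorem modifiedWeightedChebyshev_minimizer_properlyParetoOptimal
    (n m : ℕ) (Ω : Set (Fin n → ℝ))
    (L : Fin (m + 1) → (Fin n → ℝ) → ℝ)
    (a k : Fin (m + 1) → ℝ) (ε : ℝ)
    (hΩ : Ω.Nonempty)
    (ha : ∀ x ∈ Ω, ∀ i, a i < L i x)
    (hε : 0 < ε) (hk : ∀ i, 0 < k i)
    (xstar : Fin n → ℝ) (hxstar : xstar ∈ Ω)
    (hmin : ∀ x ∈ Ω,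
      Finset.univ.sup' Finset.univ_nonempty
          (fun i => k i * ((L i xstar - a i) + ε * ∑ j, (L j xstar - a j))) ≤
        Finset.univ.sup' Finset.univ_nonempty
          (fun i => k i * ((L i x - a i) + ε * ∑ j, (L j x - a j)))) :
    (¬ ∃ x' ∈ Ω, (∀ i, L i x' ≤ L i xstar) ∧ ∃ j, L j x' < L j xstar) ∧
      ∃ M > (0 : ℝ), ∀ i, ∀ x' ∈ Ω, L i x' < L i xstar →
        ∃ j, L j xstar < L j x' ∧
          (L i xstar - L i x') / (L j x' - L j xstar) ≤ M :=
  modifiedWeightedChebyshev_minimizer_properlyParetoOptimal_general n m Ω L a k ε hε hk xstar hmin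
end

section
/- Let Ω be a nonempty subset of ℝ^n, let L_0, …, L_m : ℝ^n → ℝ, and let a ∈ ℝ^{m+1} satisfy a_i < L_i(x) for all x ∈ Ω and all i. If x* ∈ Ω is properly Pareto optimal in the sense of Geoffrion, then there exist ε > 0 and an importance vector k ∈ ℝ^{m+1} with k_i > 0 for all i and Σ_{i=0}^m k_i = 1 such that x* minimizes over Ω the modified weighted Chebyshev objective ψ_{k,ε}(x) = max_{0≤i≤m} k_i [ (L_i(x) − a_i) + ε Σ_{j=0}^m (L_j(x) − a_j) ]. -/
/-!
Take the weights `k i` proportional to `1 / b i`, where `b i = (L i x* - a i) + ε ∑ j (L j x* - a j)`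
is positive because `a` is a strict lower bound; then every term `k i * b i` of `ψ(x*)` is the same
number, so `ψ(x*) ≤ ψ(x)` as soon as a single coordinate of `x` satisfies `b i ≤ b i(x)`. Writing
`d = L(x) - L(x*)`, that coordinate exists when `ε ≤ 1 / ((m + 1) M)`: if all `d i + ε ∑ d` were
negative, then `∑ d < 0`, the smallest `d i` is negative, and Geoffrion's bound gives a `j` with
`0 < d j` and `d j < -ε ∑ d ≤ ε (m + 1) M d j ≤ d j`.
-/

open Finset

section Tradeoff

variable {ι : Type*} [Fintype ι]

theorem exists_mul_card_le_sum [Nonempty ι] (d : ι → ℝ) :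
    ∃ i, Fintype.card ι * d i ≤ ∑ j, d j := by
  obtain ⟨i, -, hi⟩ := exists_min_image univ d univ_nonempty
  refine ⟨i, ?_⟩
  simpa using card_nsmul_le_sum univ d (d i) fun j _ => hi j (mem_univ j)

theorem sum_neg_of_forall_add_mul_sum_neg [Nonempty ι] {d : ι → ℝ} {ε : ℝ} (hε : 0 ≤ ε)
    (h : ∀ i, d i + ε * ∑ j, d j < 0) : ∑ j, d j < 0 := by
  have hsum : ∑ i, (d i + ε * ∑ j, d j) < 0 :=
    sum_neg (fun i _ => h i) univ_nonempty
  rw [sum_add_distrib, sum_const, card_univ, nsmul_eq_mul] at hsum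
  by_contra! hD
  have : 0 ≤ (Fintype.card ι : ℝ) * (ε * ∑ j, d j) := by positivity
  linarith

theorem exists_nonneg_add_mul_sum_of_tradeoff [Nonempty ι] {d : ι → ℝ} {M ε : ℝ}
    (hε : 0 ≤ ε) (hεM : ε * Fintype.card ι * M ≤ 1)
    (htrade : ∀ i, d i < 0 → ∃ j, 0 < d j ∧ -d i ≤ M * d j) :
    ∃ i, 0 ≤ d i + ε * ∑ j, d j := by
  by_contra! h
  have hD := sum_neg_of_forall_add_mul_sum_neg hε h
  obtain ⟨i, hi⟩ := exists_mul_card_le_sum d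
  have hcard : (0 : ℝ) < Fintype.card ι := by exact_mod_cast Fintype.card_pos
  obtain ⟨j, hj, hij⟩ := htrade i (by nlinarith)
  have hj' := h j
  nlinarith [mul_le_mul_of_nonneg_left hij (mul_nonneg hε hcard.le)]

end Tradeoff

section InvWeights

variable {ι : Type*} [Fintype ι] {b : ι → ℝ}

noncomputable def invWeights (b : ι → ℝ) (i : ι) : ℝ := (∑ j, (b j)⁻¹)⁻¹ * (b i)⁻¹

theorem invWeights_pos [Nonempty ι] (hb : ∀ i, 0 < b i) (i : ι) : 0 < invWeights b i := by
  have hsum := sum_pos (fun j _ => inv_pos.2 (hb j)) (univ_nonempty (α := ι))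
  have hbi := hb i
  unfold invWeights
  positivity

theorem sum_invWeights [Nonempty ι] (hb : ∀ i, 0 < b i) : ∑ i, invWeights b i = 1 := by
  simp_rw [invWeights, ← mul_sum]
  exact inv_mul_cancel₀ (sum_pos (fun j _ => inv_pos.2 (hb j)) univ_nonempty).ne'

theorem invWeights_mul_self {i : ι} (hi : b i ≠ 0) : invWeights b i * b i = (∑ j, (b j)⁻¹)⁻¹ := by
  rw [invWeights, mul_assoc, inv_mul_cancel₀ hi, mul_one]

theorem sup'_invWeights_mul_self_le [Nonempty ι] (hb : ∀ i, 0 < b i) {y : ι → ℝ}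
    (h : ∃ i, b i ≤ y i) :
    univ.sup' univ_nonempty (fun i => invWeights b i * b i) ≤
      univ.sup' univ_nonempty (fun i => invWeights b i * y i) := by
  obtain ⟨i, hi⟩ := h
  refine sup'_le _ _ fun j _ => ?_
  calc invWeights b j * b j = invWeights b i * b i := by
        rw [invWeights_mul_self (hb j).ne', invWeights_mul_self (hb i).ne']
    _ ≤ invWeights b i * y i := mul_le_mul_of_nonneg_left hi (invWeights_pos hb i).le
    _ ≤ _ := le_sup' (fun i => invWeights b i * y i) (mem_univ i)

end InvWeights

theorem properlyParetoOptimal_minimizes_modifiedWeightedChebyshev_general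
    (n m : ℕ) (Ω : Set (Fin n → ℝ))
    (L : Fin (m + 1) → (Fin n → ℝ) → ℝ)
    (a : Fin (m + 1) → ℝ)
    (ha : ∀ x ∈ Ω, ∀ i, a i < L i x)
    (xstar : Fin n → ℝ) (hxstar : xstar ∈ Ω)
    (hproper : ∃ M > (0 : ℝ), ∀ i, ∀ x' ∈ Ω, L i x' < L i xstar →
      ∃ j, L j xstar < L j x' ∧
        (L i xstar - L i x') / (L j x' - L j xstar) ≤ M) :
    ∃ ε > (0 : ℝ), ∃ k : Fin (m + 1) → ℝ,
      (∀ i, 0 < k i) ∧ (∑ i, k i = 1) ∧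
        ∀ x ∈ Ω,
          Finset.univ.sup' Finset.univ_nonempty
              (fun i => k i * ((L i xstar - a i) + ε * ∑ j, (L j xstar - a j))) ≤
            Finset.univ.sup' Finset.univ_nonempty
              (fun i => k i * ((L i x - a i) + ε * ∑ j, (L j x - a j))) := by
  obtain ⟨M, hM, hprop⟩ := hproper
  set ε : ℝ := ((m + 1 : ℝ) * M)⁻¹
  have hε : 0 < ε := by positivity
  set b : Fin (m + 1) → ℝ := fun i => (L i xstar - a i) + ε * ∑ j, (L j xstar - a j)
  have hb : ∀ i, 0 < b i := fun i =>
    add_pos (sub_pos.2 (ha xstar hxstar i))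
      (mul_pos hε (sum_pos (fun j _ => sub_pos.2 (ha xstar hxstar j)) univ_nonempty))
  refine ⟨ε, hε, invWeights b, invWeights_pos hb, sum_invWeights hb, fun x hx => ?_⟩
  refine sup'_invWeights_mul_self_le hb ?_
  have htrade : ∀ i, L i x - L i xstar < 0 →
      ∃ j, 0 < L j x - L j xstar ∧ -(L i x - L i xstar) ≤ M * (L j x - L j xstar) := by
    intro i hi
    obtain ⟨j, hj, hij⟩ := hprop i x hx (sub_neg.1 hi)
    exact ⟨j, sub_pos.2 hj, by rw [div_le_iff₀ (sub_pos.2 hj)] at hij; linarith⟩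
  have hεM : ε * Fintype.card (Fin (m + 1)) * M ≤ 1 := by
    rw [Fintype.card_fin, Nat.cast_succ, mul_assoc]
    exact (inv_mul_cancel₀ (by positivity)).le
  obtain ⟨i, hi⟩ := exists_nonneg_add_mul_sum_of_tradeoff hε.le hεM htrade
  have hsum : ∑ j, (L j x - L j xstar) = ∑ j, (L j x - a j) - ∑ j, (L j xstar - a j) := by
    rw [← sum_sub_distrib]
    exact sum_congr rfl fun j _ => by ring
  rw [hsum] at hi
  exact ⟨i, by linarith⟩

/-- Every properly Pareto optimal point (in the sense of
Geoffrion) is a minimizer over `Ω` of the modified weighted Chebyshev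
objective for some `ε > 0` and some positive importance vector `k` summing
to one. -/
theorem properlyParetoOptimal_minimizes_modifiedWeightedChebyshev
    (n m : ℕ) (Ω : Set (Fin n → ℝ))
    (L : Fin (m + 1) → (Fin n → ℝ) → ℝ)
    (a : Fin (m + 1) → ℝ)
    (hΩ : Ω.Nonempty)
    (ha : ∀ x ∈ Ω, ∀ i, a i < L i x)
    (xstar : Fin n → ℝ) (hxstar : xstar ∈ Ω)
    (hpareto : ¬ ∃ x' ∈ Ω, (∀ i, L i x' ≤ L i xstar) ∧ ∃ j, L j x' < L j xstar)
    (hproper : ∃ M > (0 : ℝ), ∀ i, ∀ x' ∈ Ω, L i x' < L i xstar →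
      ∃ j, L j xstar < L j x' ∧
        (L i xstar - L i x') / (L j x' - L j xstar) ≤ M) :
    ∃ ε > (0 : ℝ), ∃ k : Fin (m + 1) → ℝ,
      (∀ i, 0 < k i) ∧ (∑ i, k i = 1) ∧
        ∀ x ∈ Ω,
          Finset.univ.sup' Finset.univ_nonempty
              (fun i => k i * ((L i xstar - a i) + ε * ∑ j, (L j xstar - a j))) ≤
            Finset.univ.sup' Finset.univ_nonempty
              (fun i => k i * ((L i x - a i) + ε * ∑ j, (L j x - a j))) :=
  properlyParetoOptimal_minimizes_modifiedWeightedChebyshev_general n m Ω L a ha xstar hxstar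
    hproper
end

section
/- Let Ω be a nonempty subset of ℝ^n, let L_0, …, L_m : ℝ^n → ℝ, let a ∈ ℝ^{m+1} satisfy a_i < L_i(x) for all x ∈ Ω and all i, let ε > 0, and let k ∈ ℝ^{m+1} satisfy k_i ≥ 0 for all i and Σ_{i=0}^m k_i = 1. If x* ∈ Ω minimizes over Ω the modified weighted Chebyshev objective ψ_{k,ε}(x) = max_{0≤i≤m} k_i [ (L_i(x) − a_i) + ε Σ_{j=0}^m (L_j(x) − a_j) ], then x* is Pareto optimal (not merely weakly Pareto optimal). -/
/-!
If `x'` Pareto-dominates `x*`, every deviation `L_i - a_i` weakly decreases and one strictly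
decreases, so their sum strictly decreases; since `ε > 0`, every augmented deviation
`(L_i - a_i) + ε ∑_j (L_j - a_j)` then decreases strictly. Indices with `k_i > 0` therefore
contribute strictly less to `ψ(x')` than `ψ(x*)`, while indices with `k_i = 0` contribute `0`,
which is below `ψ(x*)` because `a` lies strictly below all objective values and some `k_i` is
positive. Hence `ψ(x') < ψ(x*)`, contradicting minimality.
-/

open Finset

theorem Finset.sup'_mul_lt_sup'_mul {ι : Type*} {s : Finset ι} (hs : s.Nonempty)
    {k u v : ι → ℝ} (hk : ∀ i ∈ s, 0 ≤ k i) (huv : ∀ i ∈ s, u i < v i)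
    (hpos : 0 < s.sup' hs (fun i => k i * v i)) :
    s.sup' hs (fun i => k i * u i) < s.sup' hs (fun i => k i * v i) := by
  refine (sup'_lt_iff hs).2 fun i hi => ?_
  rcases (hk i hi).eq_or_lt with hki | hki
  · simpa [← hki] using hpos
  · exact (mul_lt_mul_of_pos_left (huv i hi) hki).trans_le (le_sup' (fun i => k i * v i) hi)

section ModifiedChebyshev

variable {ι : Type*} [Fintype ι]

/-- The augmented deviation `d_i + ε ∑_j d_j`; with `d_j = L_j(x) - a_j` it is the bracket
in `ψ_{k,ε}(x)`. -/
def augmentedDeviation (ε : ℝ) (d : ι → ℝ) (i : ι) : ℝ := d i + ε * ∑ j, d j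

variable {ε : ℝ} {d e : ι → ℝ}

theorem augmentedDeviation_pos (hε : 0 ≤ ε) (hd : ∀ j, 0 < d j) (i : ι) :
    0 < augmentedDeviation ε d i :=
  add_pos_of_pos_of_nonneg (hd i) (mul_nonneg hε (sum_nonneg fun j _ => (hd j).le))

theorem augmentedDeviation_lt_of_lt (hε : 0 < ε) (hde : d < e) (i : ι) :
    augmentedDeviation ε d i < augmentedDeviation ε e i :=
  add_lt_add_of_le_of_lt (hde.le i)
    (mul_lt_mul_of_pos_left (Fintype.sum_strictMono hde) hε)

variable [Nonempty ι]

def modifiedChebyshev (k : ι → ℝ) (ε : ℝ) (d : ι → ℝ) : ℝ :=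
  univ.sup' univ_nonempty fun i => k i * augmentedDeviation ε d i

theorem modifiedChebyshev_pos {k : ι → ℝ} {i : ι} (hki : 0 < k i) (hε : 0 ≤ ε)
    (hd : ∀ j, 0 < d j) : 0 < modifiedChebyshev k ε d :=
  (mul_pos hki (augmentedDeviation_pos hε hd i)).trans_le
    (le_sup' (fun i => k i * augmentedDeviation ε d i) (mem_univ i))

theorem modifiedChebyshev_lt_of_lt {k : ι → ℝ} (hk : ∀ i, 0 ≤ k i) (hk_ne : ∃ i, 0 < k i)
    (hε : 0 < ε) (hde : d < e) (he : ∀ j, 0 < e j) :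
    modifiedChebyshev k ε d < modifiedChebyshev k ε e := by
  obtain ⟨i, hki⟩ := hk_ne
  exact sup'_mul_lt_sup'_mul _ (fun i _ => hk i)
    (fun i _ => augmentedDeviation_lt_of_lt hε hde i) (modifiedChebyshev_pos hki hε.le he)

end ModifiedChebyshev

theorem modifiedWeightedChebyshev_minimizer_paretoOptimal_general
    (n m : ℕ) (Ω : Set (Fin n → ℝ))
    (L : Fin (m + 1) → (Fin n → ℝ) → ℝ)
    (a k : Fin (m + 1) → ℝ) (ε : ℝ)
    (ha : ∀ x ∈ Ω, ∀ i, a i < L i x)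
    (hε : 0 < ε) (hk : ∀ i, 0 ≤ k i) (hksum : ∑ i, k i = 1)
    (xstar : Fin n → ℝ) (hxstar : xstar ∈ Ω)
    (hmin : ∀ x ∈ Ω,
      Finset.univ.sup' Finset.univ_nonempty
          (fun i => k i * ((L i xstar - a i) + ε * ∑ j, (L j xstar - a j))) ≤
        Finset.univ.sup' Finset.univ_nonempty
          (fun i => k i * ((L i x - a i) + ε * ∑ j, (L j x - a j)))) :
    ¬ ∃ x' ∈ Ω, (∀ i, L i x' ≤ L i xstar) ∧ ∃ j, L j x' < L j xstar := by
  rintro ⟨x', hx', hle, j, hlt⟩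
  have hdom : (fun i => L i x' - a i) < fun i => L i xstar - a i :=
    Pi.lt_def.2 ⟨fun i => sub_le_sub_right (hle i) _, j, sub_lt_sub_right hlt _⟩
  obtain ⟨i, -, hki⟩ := exists_ne_zero_of_sum_ne_zero (hksum ▸ one_ne_zero)
  have hψ := modifiedChebyshev_lt_of_lt hk ⟨i, (hk i).lt_of_ne' hki⟩ hε hdom
    fun i => sub_pos.2 (ha xstar hxstar i)
  exact (hmin x' hx').not_gt hψ

/-- A minimizer over `Ω` of the modified weighted Chebyshev
objective `ψ_{k,ε}(x) = max_i k_i [(L_i(x) - a_i) + ε ∑_j (L_j(x) - a_j)]`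
with `ε > 0`, `k_i ≥ 0`, `∑ k_i = 1` is Pareto optimal (not merely weakly
Pareto optimal). -/
theorem modifiedWeightedChebyshev_minimizer_paretoOptimal
    (n m : ℕ) (Ω : Set (Fin n → ℝ))
    (L : Fin (m + 1) → (Fin n → ℝ) → ℝ)
    (a k : Fin (m + 1) → ℝ) (ε : ℝ)
    (hΩ : Ω.Nonempty)
    (ha : ∀ x ∈ Ω, ∀ i, a i < L i x)
    (hε : 0 < ε) (hk : ∀ i, 0 ≤ k i) (hksum : ∑ i, k i = 1)
    (xstar : Fin n → ℝ) (hxstar : xstar ∈ Ω)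
    (hmin : ∀ x ∈ Ω,
      Finset.univ.sup' Finset.univ_nonempty
          (fun i => k i * ((L i xstar - a i) + ε * ∑ j, (L j xstar - a j))) ≤
        Finset.univ.sup' Finset.univ_nonempty
          (fun i => k i * ((L i x - a i) + ε * ∑ j, (L j x - a j)))) :
    ¬ ∃ x' ∈ Ω, (∀ i, L i x' ≤ L i xstar) ∧ ∃ j, L j x' < L j xstar :=
  modifiedWeightedChebyshev_minimizer_paretoOptimal_general n m Ω L a k ε ha hε hk hksum xstar
    hxstar hmin
end

section
/- Let Ω be a nonempty convex subset of ℝ^n and let L_0, …, L_m : ℝ^n → ℝ be convex functions on Ω. If x* ∈ Ω is weakly Pareto optimal, then there exists a weight vector k ∈ ℝ^{m+1} with k_i ≥ 0 for all i and Σ_{i=0}^m k_i = 1 such that x* minimizes the weighted-sum objective Σ_{i=0}^m k_i L_i(x) over Ω. Hence in the convex setting every (weakly) Pareto optimal point can be recovered by the weighted-sum scalarization. -/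
/-- In the convex setting (convex `Ω`, convex objectives),
every weakly Pareto optimal point minimizes the weighted-sum objective
`∑ k_i L_i(x)` over `Ω` for some weights `k_i ≥ 0` with `∑ k_i = 1`. -/
theorem convex_weaklyParetoOptimal_minimizes_weightedSum
    (n m : ℕ) (Ω : Set (Fin n → ℝ))
    (L : Fin (m + 1) → (Fin n → ℝ) → ℝ)
    (hΩ : Ω.Nonempty) (hΩconv : Convex ℝ Ω)
    (hL : ∀ i, ConvexOn ℝ Ω (L i))
    (xstar : Fin n → ℝ) (hxstar : xstar ∈ Ω)
    (hweak : ¬ ∃ x' ∈ Ω, ∀ i, L i x' < L i xstar) :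
    ∃ k : Fin (m + 1) → ℝ,
      (∀ i, 0 ≤ k i) ∧ (∑ i, k i = 1) ∧
        ∀ x ∈ Ω, ∑ i, k i * L i xstar ≤ ∑ i, k i * L i x := by
  classical
  set S : Set (Fin (m + 1) → ℝ) :=
    {y | ∃ x ∈ Ω, ∀ i, L i x - L i xstar < y i} with hSdef
  -- S is convex
  have hSconv : Convex ℝ S := by
    rintro y₁ ⟨x₁, hx₁, h₁⟩ y₂ ⟨x₂, hx₂, h₂⟩ a b ha hb hab
    refine ⟨a • x₁ + b • x₂, hΩconv hx₁ hx₂ ha hb hab, fun i => ?_⟩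
    have hle := (hL i).2 hx₁ hx₂ ha hb hab
    simp only [smul_eq_mul] at hle
    have hstrict : a * (L i x₁) + b * (L i x₂) < a * y₁ i + b * y₂ i + L i xstar := by
      rcases eq_or_lt_of_le ha with rfl | ha'
      · have hb1 : b = 1 := by linarith
        have := h₂ i
        simp [hb1]; linarith
      · rcases eq_or_lt_of_le hb with rfl | hb'
        · have ha1 : a = 1 := by linarith
          have := h₁ i
          simp [ha1]; linarith
        · have t1 := mul_lt_mul_of_pos_left (h₁ i) ha'
          have t2 := mul_lt_mul_of_pos_left (h₂ i) hb'
          have h3 : a * L i xstar + b * L i xstar = L i xstar := by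
            rw [← add_mul, hab, one_mul]
          nlinarith
    have : (a • y₁ + b • y₂) i = a * y₁ i + b * y₂ i := by simp
    rw [this]
    linarith
  -- S is open
  have hSopen : IsOpen S := by
    have : S = ⋃ x ∈ Ω, ⋂ i, {y : Fin (m + 1) → ℝ | L i x - L i xstar < y i} := by
      ext y
      simp [hSdef, Set.mem_iUnion, Set.mem_iInter]
    rw [this]
    exact isOpen_biUnion fun x _ => isOpen_iInter_of_finite fun i =>
      isOpen_lt continuous_const (continuous_apply i)
  -- 0 ∉ S
  have h0 : (0 : Fin (m + 1) → ℝ) ∉ S := by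
    rintro ⟨x, hx, h⟩
    exact hweak ⟨x, hx, fun i => by have := h i; simpa [sub_neg] using this⟩
  -- S is nonempty
  obtain ⟨x₀, hx₀⟩ := hΩ
  have hy₀ : (fun j => L j x₀ - L j xstar + 1) ∈ S :=
    ⟨x₀, hx₀, fun i => by
      show L i x₀ - L i xstar < L i x₀ - L i xstar + 1
      linarith⟩
  -- separation
  obtain ⟨f, hf⟩ := geometric_hahn_banach_open_point hSconv hSopen h0
  have hfneg : ∀ y ∈ S, f y < 0 := by
    intro y hy
    have := hf y hy
    simpa using this
  -- f as a sum
  have hf_eq : ∀ y : Fin (m + 1) → ℝ, f y = ∑ i, y i * f (Pi.single i 1) := by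
    intro y
    have hy : y = ∑ i, y i • (Pi.single i (1 : ℝ) : Fin (m + 1) → ℝ) := by
      conv_lhs => rw [← Finset.univ_sum_single y]
      refine Finset.sum_congr rfl fun i _ => ?_
      ext j
      by_cases h : j = i <;> simp [Pi.single_apply, h]
    conv_lhs => rw [hy]
    rw [map_sum]
    simp [smul_eq_mul]
  set k' : Fin (m + 1) → ℝ := fun i => -f (Pi.single i 1) with hk'
  -- each k' i ≥ 0
  have hk'nonneg : ∀ i, 0 ≤ k' i := by
    intro i
    by_contra hneg
    push_neg at hneg
    have hfe : 0 < f (Pi.single i 1) := by simp [hk'] at hneg; linarith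
    set B := f (fun j => L j x₀ - L j xstar + 1) with hB
    set t : ℝ := (1 + |B|) / f (Pi.single i 1) with ht
    have htpos : 0 < t := by positivity
    have hmem : ((fun j => L j x₀ - L j xstar + 1) +
        t • (Pi.single i (1 : ℝ) : Fin (m + 1) → ℝ)) ∈ S := by
      refine ⟨x₀, hx₀, fun j => ?_⟩
      have hnn : (0:ℝ) ≤ t * (Pi.single i (1:ℝ) : Fin (m + 1) → ℝ) j := by
        by_cases h : j = i <;> simp [Pi.single_apply, h, le_of_lt htpos]
      show L j x₀ - L j xstar < L j x₀ - L j xstar + 1 +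
        t * (Pi.single i (1:ℝ) : Fin (m + 1) → ℝ) j
      linarith
    have := hfneg _ hmem
    rw [map_add, map_smul] at this
    have ht2 : t * f (Pi.single i 1) = 1 + |B| := by
      rw [ht]; field_simp
    have habs : -|B| ≤ B := neg_abs_le B
    simp only [smul_eq_mul] at this
    rw [← hB] at this
    linarith
  -- the sum of k' is positive
  set s : ℝ := ∑ i, k' i with hs
  have hsnonneg : 0 ≤ s := Finset.sum_nonneg fun i _ => hk'nonneg i
  have hspos : 0 < s := by
    rcases eq_or_lt_of_le hsnonneg with h | h
    · exfalso
      have hall : ∀ i, k' i = 0 := by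
        intro i
        have := (Finset.sum_eq_zero_iff_of_nonneg (fun i _ => hk'nonneg i)).mp h.symm
        exact this i (Finset.mem_univ i)
      have : f (fun j => L j x₀ - L j xstar + 1) = 0 := by
        rw [hf_eq]
        refine Finset.sum_eq_zero fun i _ => ?_
        have : f (Pi.single i 1) = 0 := by
          have := hall i; simp [hk'] at this; linarith
        simp [this]
      have := hfneg _ hy₀
      linarith
    · exact h
  -- key inequality: ∀ x ∈ Ω, ∑ k' i * L i xstar ≤ ∑ k' i * L i x
  have hkey : ∀ x ∈ Ω, ∑ i, k' i * L i xstar ≤ ∑ i, k' i * L i x := by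
    intro x hx
    by_contra hlt
    push_neg at hlt
    set A : ℝ := ∑ i, k' i * L i x - ∑ i, k' i * L i xstar with hA
    have hAneg : A < 0 := by simp [hA]; linarith
    set ε : ℝ := -A / (2 * s) with hε
    have hεpos : 0 < ε := by
      rw [hε]
      exact div_pos (by linarith) (by linarith)
    have hmem : (fun j => L j x - L j xstar + ε) ∈ S :=
      ⟨x, hx, fun j => by
        show L j x - L j xstar < L j x - L j xstar + ε
        linarith⟩
    have hv := hfneg _ hmem
    rw [hf_eq] at hv
    have heq : ∑ i, (L i x - L i xstar + ε) * f (Pi.single i 1)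
        = -(∑ i, (k' i * L i x - k' i * L i xstar + ε * k' i)) := by
      rw [← Finset.sum_neg_distrib]
      refine Finset.sum_congr rfl fun i _ => ?_
      simp only [hk']
      ring
    have heq2 : ∑ i, (k' i * L i x - k' i * L i xstar + ε * k' i) = A + ε * s := by
      rw [hA, hs, Finset.mul_sum, ← Finset.sum_sub_distrib, ← Finset.sum_add_distrib]
    rw [heq, heq2] at hv
    have hes : ε * s = -A / 2 := by
      rw [hε]
      field_simp
    rw [hes] at hv
    linarith
  -- normalize
  refine ⟨fun i => k' i / s, fun i => div_nonneg (hk'nonneg i) hsnonneg, ?_, ?_⟩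
  · rw [← Finset.sum_div, ← hs, div_self (ne_of_gt hspos)]
  · intro x hx
    have := hkey x hx
    have h1 : ∑ i, k' i / s * L i xstar = (∑ i, k' i * L i xstar) / s := by
      rw [Finset.sum_div]
      exact Finset.sum_congr rfl fun i _ => by ring
    have h2 : ∑ i, k' i / s * L i x = (∑ i, k' i * L i x) / s := by
      rw [Finset.sum_div]
      exact Finset.sum_congr rfl fun i _ => by ring
    rw [h1, h2]
    exact (div_le_div_iff_of_pos_right hspos).mpr this
end

section
/- Let θ ∈ ℝ^N satisfy θ_1 ≥ θ_2 ≥ ⋯ ≥ θ_N ≥ 0 and θ_1 > 0. Then the GrOWL function G_θ : ℝ^{N×d} → ℝ, defined by G_θ(W) = Σ_{i=1}^N θ_i ‖w_{[i]}‖_2, where w_{[i]} is the row of W with the i-th largest Euclidean norm, is a norm on the space of N×d real matrices: it is nonnegative, vanishes exactly at W = 0, is absolutely homogeneous (G_θ(cW) = |c| G_θ(W) for all c ∈ ℝ), and satisfies the triangle inequality G_θ(W + V) ≤ G_θ(W) + G_θ(V). In particular, G_θ is convex. -/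
/-- The Group Ordered Weighted ℓ1 (GrOWL) regularizer:
`growl θ W = ∑ i, θ i * ‖w_[i]‖₂`, where `w_[i]` is the row of `W` with the
`i`-th largest Euclidean norm (obtained by sorting the row norms in
nondecreasing order via `Tuple.sort` and reversing the index). -/
noncomputable def growl {N d : ℕ} (θ : Fin N → ℝ)
    (W : Fin N → EuclideanSpace ℝ (Fin d)) : ℝ :=
  ∑ i : Fin N, θ i * ‖W (Tuple.sort (fun j => ‖W j‖) (Fin.rev i))‖

/-!
Sorting the row norms in decreasing order maximises `∑ i, θ i * ‖W (σ i)‖` over all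
permutations `σ` (rearrangement inequality), so `G_θ` is a supremum of functions that are each
subadditive and absolutely homogeneous, hence a seminorm. It is definite because it dominates
`θ₁ * ‖w_j‖` for every row `w_j`.
-/

open Finset

lemma Antitone.sum_mul_comp_perm_le_sum_mul_sort_rev {α : Type*} [Semiring α] [LinearOrder α]
    [IsStrictOrderedRing α] [ExistsAddOfLE α] {N : ℕ} {θ : Fin N → α} (hθ : Antitone θ)
    (f : Fin N → α) (σ : Equiv.Perm (Fin N)) :
    ∑ i, θ i * f (σ i) ≤ ∑ i, θ i * f (Tuple.sort f (Fin.rev i)) := by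
  set g : Fin N → α := fun i => f (Tuple.sort f (Fin.rev i))
  have hg : Antitone g := fun i j hij => Tuple.monotone_sort f (Fin.rev_le_rev.mpr hij)
  have hf : ∀ i, f (σ i) = g ((σ.trans ((Tuple.sort f).symm.trans Fin.revPerm)) i) := by
    simp [g]
  simpa only [hf] using (hθ.monovary hg).sum_mul_comp_perm_le_sum_mul

section Growl

variable {N d : ℕ} {θ : Fin N → ℝ}

lemma sum_mul_norm_comp_perm_le_growl (hθ : Antitone θ) (W : Fin N → EuclideanSpace ℝ (Fin d))
    (σ : Equiv.Perm (Fin N)) : ∑ i, θ i * ‖W (σ i)‖ ≤ growl θ W :=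
  hθ.sum_mul_comp_perm_le_sum_mul_sort_rev (fun j => ‖W j‖) σ

lemma exists_perm_growl_eq_sum_mul_norm (θ : Fin N → ℝ) (W : Fin N → EuclideanSpace ℝ (Fin d)) :
    ∃ σ : Equiv.Perm (Fin N), growl θ W = ∑ i, θ i * ‖W (σ i)‖ :=
  ⟨Fin.revPerm.trans (Tuple.sort fun j => ‖W j‖), rfl⟩

lemma growl_zero (θ : Fin N → ℝ) : growl θ (0 : Fin N → EuclideanSpace ℝ (Fin d)) = 0 := by
  simp [growl]

lemma growl_add_le (hθ : Antitone θ) (hθ0 : ∀ i, 0 ≤ θ i)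
    (W V : Fin N → EuclideanSpace ℝ (Fin d)) : growl θ (W + V) ≤ growl θ W + growl θ V := by
  obtain ⟨σ, hσ⟩ := exists_perm_growl_eq_sum_mul_norm θ (W + V)
  calc growl θ (W + V) = ∑ i, θ i * ‖W (σ i) + V (σ i)‖ := hσ
    _ ≤ ∑ i, (θ i * ‖W (σ i)‖ + θ i * ‖V (σ i)‖) := by
        gcongr with i
        rw [← mul_add]
        exact mul_le_mul_of_nonneg_left (norm_add_le _ _) (hθ0 i)
    _ = ∑ i, θ i * ‖W (σ i)‖ + ∑ i, θ i * ‖V (σ i)‖ := sum_add_distrib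
    _ ≤ growl θ W + growl θ V := by
        gcongr <;> exact sum_mul_norm_comp_perm_le_growl hθ _ σ

lemma growl_smul_le (hθ : Antitone θ) (c : ℝ) (W : Fin N → EuclideanSpace ℝ (Fin d)) :
    growl θ (c • W) ≤ ‖c‖ * growl θ W := by
  obtain ⟨σ, hσ⟩ := exists_perm_growl_eq_sum_mul_norm θ (c • W)
  calc growl θ (c • W) = ‖c‖ * ∑ i, θ i * ‖W (σ i)‖ := by
        simp only [hσ, mul_sum, Pi.smul_apply, norm_smul]
        exact sum_congr rfl fun i _ => by ring
    _ ≤ ‖c‖ * growl θ W := by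
        gcongr
        exact sum_mul_norm_comp_perm_le_growl hθ W σ

variable (d) in
noncomputable def growlSeminorm (hθ : Antitone θ) (hθ0 : ∀ i, 0 ≤ θ i) :
    Seminorm ℝ (Fin N → EuclideanSpace ℝ (Fin d)) :=
  Seminorm.ofSMulLE (growl θ) (growl_zero θ) (growl_add_le hθ hθ0) (growl_smul_le hθ)

lemma mul_norm_le_growl (hθ : Antitone θ) (hθ0 : ∀ i, 0 ≤ θ i) (i₀ : Fin N)
    (W : Fin N → EuclideanSpace ℝ (Fin d)) (j : Fin N) : θ i₀ * ‖W j‖ ≤ growl θ W := by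
  calc θ i₀ * ‖W j‖ = θ i₀ * ‖W (Equiv.swap i₀ j i₀)‖ := by rw [Equiv.swap_apply_left]
    _ ≤ ∑ i, θ i * ‖W (Equiv.swap i₀ j i)‖ :=
        single_le_sum (f := fun i => θ i * ‖W (Equiv.swap i₀ j i)‖)
          (fun i _ => mul_nonneg (hθ0 i) (norm_nonneg _)) (mem_univ i₀)
    _ ≤ growl θ W := sum_mul_norm_comp_perm_le_growl hθ W _

lemma growl_eq_zero_iff (hθ : Antitone θ) (hθ0 : ∀ i, 0 ≤ θ i) {i₀ : Fin N} (hθi₀ : 0 < θ i₀)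
    (W : Fin N → EuclideanSpace ℝ (Fin d)) : growl θ W = 0 ↔ W = 0 := by
  refine ⟨fun hW => funext fun j => norm_le_zero_iff.mp ?_, fun hW => hW ▸ growl_zero θ⟩
  have := mul_norm_le_growl hθ hθ0 i₀ W j
  rw [hW] at this
  exact nonpos_of_mul_nonpos_right this hθi₀

end Growl

/-- For a nonincreasing nonnegative weight vector `θ` with
`θ_1 > 0`, the GrOWL function `G_θ` is a norm on the space of `N × d` real
matrices (rows in `ℝ^d` with the Euclidean norm): it is nonnegative, vanishes
exactly at `0`, is absolutely homogeneous, and satisfies the triangle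
inequality; in particular it is convex. -/
theorem growl_is_norm {N d : ℕ} (hN : 0 < N) (θ : Fin N → ℝ)
    (hθ : Antitone θ) (hθ0 : ∀ i, 0 ≤ θ i) (hθ1 : 0 < θ ⟨0, hN⟩) :
    (∀ W : Fin N → EuclideanSpace ℝ (Fin d), 0 ≤ growl θ W) ∧
    (∀ W : Fin N → EuclideanSpace ℝ (Fin d), growl θ W = 0 ↔ W = 0) ∧
    (∀ (c : ℝ) (W : Fin N → EuclideanSpace ℝ (Fin d)),
      growl θ (c • W) = |c| * growl θ W) ∧
    (∀ W V : Fin N → EuclideanSpace ℝ (Fin d),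
      growl θ (W + V) ≤ growl θ W + growl θ V) ∧
    ConvexOn ℝ Set.univ (growl θ (d := d)) := by
  set p := growlSeminorm d hθ hθ0
  exact ⟨apply_nonneg p, growl_eq_zero_iff hθ hθ0 hθ1, map_smul_eq_mul p,
    map_add_le_add p, p.convexOn⟩
end
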